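/- Any two transpositions of disjoint cylinder sets in C × C that swap cylinders of matching 'shape' are conjugate by a homeomorphism built from prefix replacements. Precisely: given transpositions τ swapping [u₁]×[v₁] with [u₂]×[v₂], and σ swapping [u₁']×[v₁'] with [u₂']×[v₂'], where the four cylinders involved in each are pairwise disjoint and their complements are nonempty, there exists a prefix-replacement homeomorphism h of C × C with h τ h⁻¹ = σ. -/

import Mathlib

/-- The Cantor set, modeled as infinite binary sequences. -/
abbrev C := ℕ → Bool

def shift (x : C) : C := fun n => x (n + 1)

def prepend (b : Bool) (y : C) : C
  | 0 => b
  | n + 1 => y n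

/-- Concatenate a finite binary word with an infinite binary sequence. -/
def cat (u : List Bool) (w : C) : C := fun n =>
  if h : n < u.length then u.get ⟨n, h⟩ else w (n - u.length)

/-- The cylinder of all infinite sequences with prefix `u`. -/
def cyl (u : List Bool) : Set C := Set.range (cat u)

/-- `φ` is the baker's map supported on the cylinder set `[u] × [v]`: on that cylinder it
moves the first digit after `u` of the first coordinate to just after `v` in the second
coordinate, and it is the identity elsewhere. -/
def IsBaker (u v : List Bool) (φ : Equiv.Perm (C × C)) : Prop :=
  (∀ w w' : C, φ (cat u w, cat v w') = (cat u (shift w), cat v (prepend (w 0) w'))) ∧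
  ∀ p : C × C, p ∉ cyl u ×ˢ cyl v → φ p = p

/-- `φ` is a transposition of two disjoint cylinder sets in `C × C`: it swaps them by
prefix replacement and fixes everything else. -/
def IsCylTransposition (φ : Equiv.Perm (C × C)) : Prop :=
  ∃ u v u' v' : List Bool,
    (cyl u ×ˢ cyl v) ∩ (cyl u' ×ˢ cyl v') = ∅ ∧
    (∀ w w' : C, φ (cat u w, cat v w') = (cat u' w, cat v' w')) ∧
    (∀ w w' : C, φ (cat u' w, cat v' w') = (cat u w, cat v w')) ∧
    ∀ p : C × C, p ∉ (cyl u ×ˢ cyl v) ∪ (cyl u' ×ˢ cyl v') → φ p = p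

/-- `h` is a prefix-replacement homeomorphism of `C × C`: it is determined by a bijection
between two finite partitions of `C × C` into cylinder sets, sending `u·w ↦ u'·w` on each
piece. -/
def IsPrefixReplacement (h : Equiv.Perm (C × C)) : Prop :=
  ∃ P : Finset ((List Bool × List Bool) × (List Bool × List Bool)),
    (⋃ q ∈ P, cyl q.1.1 ×ˢ cyl q.1.2) = Set.univ ∧
    (∀ q ∈ P, ∀ r ∈ P, q ≠ r →
      (cyl q.1.1 ×ˢ cyl q.1.2) ∩ (cyl r.1.1 ×ˢ cyl r.1.2) = ∅) ∧
    (⋃ q ∈ P, cyl q.2.1 ×ˢ cyl q.2.2) = Set.univ ∧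
    (∀ q ∈ P, ∀ r ∈ P, q ≠ r →
      (cyl q.2.1 ×ˢ cyl q.2.2) ∩ (cyl r.2.1 ×ˢ cyl r.2.2) = ∅) ∧
    ∀ q ∈ P, ∀ w w' : C, h (cat q.1.1 w, cat q.1.2 w') = (cat q.2.1 w, cat q.2.2 w')

/-- `τ` is the transposition swapping the disjoint cylinder sets `[u₁]×[v₁]` and
`[u₂]×[v₂]` by prefix replacement. -/
def IsTranspositionOn (u₁ v₁ u₂ v₂ : List Bool) (τ : Equiv.Perm (C × C)) : Prop :=
  (cyl u₁ ×ˢ cyl v₁) ∩ (cyl u₂ ×ˢ cyl v₂) = ∅ ∧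
  (∀ w w' : C, τ (cat u₁ w, cat v₁ w') = (cat u₂ w, cat v₂ w')) ∧
  (∀ w w' : C, τ (cat u₂ w, cat v₂ w') = (cat u₁ w, cat v₁ w')) ∧
  ∀ p : C × C, p ∉ (cyl u₁ ×ˢ cyl v₁) ∪ (cyl u₂ ×ˢ cyl v₂) → τ p = p

/-!
Cut the complement of the support of `τ`, and that of `σ`, into finitely many pieces
`[a] × [b]`, and split pieces in half until both complements have equally many pieces.
Matching `[u₁] × [v₁]` with `[u₁'] × [v₁']`, `[u₂] × [v₂]` with `[u₂'] × [v₂']` and the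
complementary pieces in any order gives a prefix replacement `h` sending `(uᵢ w, vᵢ w')` to
`(uᵢ' w, vᵢ' w')`, and any such `h` satisfies `h τ h⁻¹ = σ`.
-/

open Function

lemma mem_cyl_iff {x : C} {u : List Bool} : x ∈ cyl u ↔ ∀ i (hi : i < u.length), x i = u[i] := by
  constructor
  · rintro ⟨w, rfl⟩ i hi
    simp [cat, hi]
  · intro h
    refine ⟨fun n => x (n + u.length), funext fun n => ?_⟩
    unfold cat
    split_ifs with hn
    · exact (h n hn).symm
    · show x (n - u.length + u.length) = x n
      rw [Nat.sub_add_cancel (not_lt.mp hn)]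

lemma cat_injective (u : List Bool) : Injective (cat u) := by
  intro w w' h
  funext n
  simpa [cat] using congrFun h (n + u.length)

lemma mem_cyl_append_singleton {x : C} {u : List Bool} {b : Bool} :
    x ∈ cyl (u ++ [b]) ↔ x ∈ cyl u ∧ x u.length = b := by
  simp only [mem_cyl_iff, List.length_append, List.length_singleton]
  constructor
  · intro h
    refine ⟨fun i hi => ?_, ?_⟩
    · rw [h i (by omega), List.getElem_append_left hi]
    · simp [h u.length (by omega)]
  · rintro ⟨h, hb⟩ i hi
    rcases Nat.lt_succ_iff_lt_or_eq.mp hi with hi | rfl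
    · rw [h i hi, List.getElem_append_left hi]
    · simp [hb]

lemma cyl_append_false_union_true (u : List Bool) :
    cyl (u ++ [false]) ∪ cyl (u ++ [true]) = cyl u := by
  ext x
  simp only [Set.mem_union, mem_cyl_append_singleton]
  cases x u.length <;> simp

lemma disjoint_cyl_append_false_true (u : List Bool) :
    Disjoint (cyl (u ++ [false])) (cyl (u ++ [true])) :=
  Set.disjoint_left.mpr fun x h₀ h₁ => by
    simp only [mem_cyl_append_singleton] at h₀ h₁
    simp [h₀.2] at h₁

lemma cyl_subset_or_disjoint {u a : List Bool} (h : u.length ≤ a.length) :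
    cyl a ⊆ cyl u ∨ Disjoint (cyl a) (cyl u) := by
  refine or_iff_not_imp_right.mpr fun hnd => ?_
  obtain ⟨y, hya, hyu⟩ := Set.not_disjoint_iff.mp hnd
  intro x hx
  rw [mem_cyl_iff] at hx hya hyu ⊢
  intro i hi
  rw [hx i (by omega), ← hya i (by omega), hyu i hi]

lemma disjoint_cyl_of_length_eq {a b : List Bool} (hl : a.length = b.length) (hne : a ≠ b) :
    Disjoint (cyl a) (cyl b) := by
  refine Set.disjoint_left.mpr fun x ha hb => hne (List.ext_getElem hl fun i hia hib => ?_)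
  rw [mem_cyl_iff] at ha hb
  rw [← ha i hia, hb i hib]

lemma mem_cyl_ofFn (x : C) (n : ℕ) : x ∈ cyl (List.ofFn fun i : Fin n => x i) :=
  mem_cyl_iff.mpr fun i hi => by simp

abbrev Piece := List Bool × List Bool

def cyl₂ (q : Piece) : Set (C × C) := cyl q.1 ×ˢ cyl q.2

def cat₂ (q : Piece) : C × C → C × C := Prod.map (cat q.1) (cat q.2)

lemma range_cat₂ (q : Piece) : Set.range (cat₂ q) = cyl₂ q := Set.range_prodMap

lemma cat₂_injective (q : Piece) : Injective (cat₂ q) :=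
  (cat_injective _).prodMap (cat_injective _)

lemma cat₂_mem_cyl₂ (q : Piece) (z : C × C) : cat₂ q z ∈ cyl₂ q :=
  range_cat₂ q ▸ Set.mem_range_self z

lemma cyl₂_subset_or_disjoint {e q : Piece} (h₁ : e.1.length ≤ q.1.length)
    (h₂ : e.2.length ≤ q.2.length) : cyl₂ q ⊆ cyl₂ e ∨ Disjoint (cyl₂ q) (cyl₂ e) := by
  rcases cyl_subset_or_disjoint h₁ with hs₁ | hd₁
  · rcases cyl_subset_or_disjoint h₂ with hs₂ | hd₂
    · exact Or.inl (Set.prod_mono hs₁ hs₂)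
    · exact Or.inr (Set.disjoint_prod.mpr (Or.inr hd₂))
  · exact Or.inr (Set.disjoint_prod.mpr (Or.inl hd₁))

def IsCylPartition (L : List Piece) (s : Set (C × C)) : Prop :=
  L.Pairwise (Disjoint on cyl₂) ∧ ⋃ q ∈ L, cyl₂ q = s

namespace IsCylPartition

variable {L A B : List Piece} {s t : Set (C × C)}

lemma subset {q : Piece} (hL : IsCylPartition L s) (hq : q ∈ L) : cyl₂ q ⊆ s :=
  hL.2 ▸ Set.subset_biUnion_of_mem hq

lemma ne_nil (hL : IsCylPartition L s) (hs : s.Nonempty) : L ≠ [] := by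
  rintro rfl
  simp [← hL.2] at hs

lemma append (hA : IsCylPartition A s) (hB : IsCylPartition B t) (hst : Disjoint s t) :
    IsCylPartition (A ++ B) (s ∪ t) := by
  refine ⟨List.pairwise_append.mpr ⟨hA.1, hB.1, fun a ha b hb =>
    hst.mono (hA.subset ha) (hB.subset hb)⟩, ?_⟩
  rw [← hA.2, ← hB.2]
  ext p
  simp only [List.mem_append, Set.mem_union, Set.mem_iUnion, exists_prop, or_and_right,
    exists_or]

lemma refine_head {q : Piece} {t : List Piece} (hL : IsCylPartition (q :: t) s)
    (hA : IsCylPartition A (cyl₂ q)) : IsCylPartition (A ++ t) s := by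
  obtain ⟨hq, ht⟩ := List.pairwise_cons.mp hL.1
  convert hA.append (⟨ht, rfl⟩ : IsCylPartition t _) (Set.disjoint_iUnion₂_right.mpr hq)
  rw [← hL.2]
  ext p
  simp

end IsCylPartition

lemma isCylPartition_pair {q r : Piece} (h : Disjoint (cyl₂ q) (cyl₂ r)) :
    IsCylPartition [q, r] (cyl₂ q ∪ cyl₂ r) :=
  ⟨List.pairwise_pair.mpr h, by simp⟩

lemma isCylPartition_split (q : Piece) :
    IsCylPartition [(q.1 ++ [false], q.2), (q.1 ++ [true], q.2)] (cyl₂ q) := by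
  convert isCylPartition_pair (q := (q.1 ++ [false], q.2)) (r := (q.1 ++ [true], q.2))
    (Set.disjoint_prod.mpr (Or.inl (disjoint_cyl_append_false_true q.1)))
  simp only [cyl₂, ← Set.union_prod, cyl_append_false_union_true]

/-- Splitting a piece in two lengthens a partition by one, as often as needed. -/
lemma IsCylPartition.exists_length_eq {L : List Piece} {s : Set (C × C)}
    (hL : IsCylPartition L s) (hne : L ≠ []) {n : ℕ} (hn : L.length ≤ n) :
    ∃ L', IsCylPartition L' s ∧ L'.length = n := by
  induction n, hn using Nat.le_induction with
  | base => exact ⟨L, hL, rfl⟩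
  | succ n hn ih =>
    obtain ⟨L', hL', rfl⟩ := ih
    match L', hL' with
    | q :: t, hL' => exact ⟨_, hL'.refine_head (isCylPartition_split q), by simp⟩
    | [], _ => exact absurd (List.length_eq_zero_iff.mp (Nat.le_zero.mp hn)) hne

noncomputable def piecesOfDepth (N : ℕ) : List Piece :=
  (Finset.univ : Finset ((Fin N → Bool) × (Fin N → Bool))).toList.map
    (Prod.map List.ofFn List.ofFn)

lemma length_of_mem_piecesOfDepth {N : ℕ} {q : Piece} (hq : q ∈ piecesOfDepth N) :
    q.1.length = N ∧ q.2.length = N := by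
  obtain ⟨f, -, rfl⟩ := List.mem_map.mp hq
  simp [Prod.map]

lemma isCylPartition_piecesOfDepth (N : ℕ) : IsCylPartition (piecesOfDepth N) Set.univ := by
  refine ⟨(Finset.nodup_toList _).map (List.ofFn_injective.prodMap List.ofFn_injective)
    |>.pairwise_of_forall_ne fun q hq r hr hne => ?_, ?_⟩
  · obtain ⟨hq₁, hq₂⟩ := length_of_mem_piecesOfDepth hq
    obtain ⟨hr₁, hr₂⟩ := length_of_mem_piecesOfDepth hr
    by_cases h₁ : q.1 = r.1
    · exact Set.disjoint_prod.mpr (Or.inr (disjoint_cyl_of_length_eq (hq₂.trans hr₂.symm)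
        fun h₂ => hne (Prod.ext h₁ h₂)))
    · exact Set.disjoint_prod.mpr (Or.inl (disjoint_cyl_of_length_eq (hq₁.trans hr₁.symm) h₁))
  · refine Set.eq_univ_of_forall fun p => Set.mem_biUnion (x := Prod.map List.ofFn List.ofFn
      (fun i : Fin N => p.1 i, fun i : Fin N => p.2 i)) ?_ ⟨mem_cyl_ofFn _ _, mem_cyl_ofFn _ _⟩
    exact List.mem_map_of_mem (Finset.mem_toList.mpr (Finset.mem_univ _))

/-- Take the pieces of a common depth `N` that miss the union: a piece of depth `N` lies inside or
misses each piece of depth `≤ N`. -/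
lemma exists_isCylPartition_compl (E : List Piece) :
    ∃ L, IsCylPartition L (⋃ e ∈ E, cyl₂ e)ᶜ := by
  classical
  set N := (E.map fun e => e.1.length + e.2.length).sum
  have hN : ∀ e ∈ E, e.1.length ≤ N ∧ e.2.length ≤ N := fun e he => by
    have := List.le_sum_of_mem (List.mem_map_of_mem (f := fun e : Piece =>
      e.1.length + e.2.length) he)
    omega
  refine ⟨(piecesOfDepth N).filter fun q => Disjoint (cyl₂ q) (⋃ e ∈ E, cyl₂ e),
    (isCylPartition_piecesOfDepth N).1.sublist List.filter_sublist, Set.ext fun p => ?_⟩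
  simp only [Set.mem_iUnion, List.mem_filter, decide_eq_true_eq, exists_prop]
  constructor
  · rintro ⟨q, ⟨-, hq⟩, hpq⟩
    exact Set.disjoint_left.mp hq hpq
  · intro hp
    obtain ⟨q, hq, hpq⟩ := Set.mem_iUnion₂.mp
      ((isCylPartition_piecesOfDepth N).2.symm ▸ Set.mem_univ p)
    refine ⟨q, ⟨hq, Set.disjoint_iUnion₂_right.mpr fun e he => ?_⟩, hpq⟩
    obtain ⟨hq₁, hq₂⟩ := length_of_mem_piecesOfDepth hq
    obtain ⟨he₁, he₂⟩ := hN e he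
    refine (cyl₂_subset_or_disjoint (by omega) (by omega)).resolve_left
      fun hsub => hp (Set.mem_biUnion he (hsub hpq))

open Classical in
/-- On `cyl₂ q.1`, for `q ∈ L.zip R`, replace the prefixes `q.1` by `q.2`; the identity off
`⋃ q ∈ L.zip R, cyl₂ q.1`. -/
noncomputable def zipReplace (L R : List Piece) (p : C × C) : C × C :=
  if h : ∃ x : (Piece × Piece) × (C × C), x.1 ∈ L.zip R ∧ cat₂ x.1.1 x.2 = p then
    cat₂ h.choose.1.2 h.choose.2
  else p

section zipReplace

variable {L R : List Piece}

lemma zipReplace_cat₂ (hL : L.Pairwise (Disjoint on cyl₂)) (hlen : L.length = R.length)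
    {q : Piece × Piece} (hq : q ∈ L.zip R) (z : C × C) :
    zipReplace L R (cat₂ q.1 z) = cat₂ q.2 z := by
  have hex : ∃ x : (Piece × Piece) × (C × C), x.1 ∈ L.zip R ∧ cat₂ x.1.1 x.2 = cat₂ q.1 z :=
    ⟨(q, z), hq, rfl⟩
  obtain ⟨hx, hxz⟩ := hex.choose_spec
  have hzip : (L.zip R).Pairwise fun x y => Disjoint (cyl₂ x.1) (cyl₂ y.1) :=
    (List.pairwise_map (R := Disjoint on cyl₂) (f := Prod.fst)).mp
      (by rwa [List.map_fst_zip hlen.le])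
  have hxq : hex.choose.1 = q := by
    by_contra hne
    have : Std.Symm fun x y : Piece × Piece => Disjoint (cyl₂ x.1) (cyl₂ y.1) :=
      ⟨fun _ _ h => h.symm⟩
    exact Set.disjoint_left.mp (hzip.forall hx hq hne) (cat₂_mem_cyl₂ _ _)
      (hxz ▸ cat₂_mem_cyl₂ q.1 z)
  rw [hxq] at hxz
  rw [zipReplace, dif_pos hex, hxq, cat₂_injective _ hxz]

lemma exists_mem_zip_cat₂_eq (hL : (⋃ q ∈ L, cyl₂ q) = Set.univ) (hlen : L.length = R.length)
    (p : C × C) : ∃ q ∈ L.zip R, ∃ z, cat₂ q.1 z = p := by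
  obtain ⟨a, ha, hpa⟩ := Set.mem_iUnion₂.mp (hL.symm ▸ Set.mem_univ p)
  obtain ⟨i, hi, rfl⟩ := List.getElem_of_mem ha
  obtain ⟨z, rfl⟩ := (range_cat₂ _).symm ▸ hpa
  exact ⟨(L[i], R[i]), List.mem_iff_getElem.mpr ⟨i, by simp [← hlen, hi], by simp⟩, z, rfl⟩

end zipReplace

lemma IsCylPartition.iUnion_toFinset_and_disjoint {T : List (Piece × Piece)}
    {f : Piece × Piece → Piece} (h : IsCylPartition (T.map f) Set.univ) :
    (⋃ q ∈ T.toFinset, cyl₂ (f q)) = Set.univ ∧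
      ∀ q ∈ T.toFinset, ∀ r ∈ T.toFinset, q ≠ r → cyl₂ (f q) ∩ cyl₂ (f r) = ∅ := by
  have : Std.Symm fun q r : Piece × Piece => Disjoint (cyl₂ (f q)) (cyl₂ (f r)) :=
    ⟨fun _ _ h => h.symm⟩
  refine ⟨?_, fun q hq r hr hne => Set.disjoint_iff_inter_eq_empty.mp
    (List.pairwise_map.mp h.1 |>.forall (List.mem_toFinset.mp hq) (List.mem_toFinset.mp hr) hne)⟩
  rw [← h.2]
  ext p
  simp only [Set.mem_iUnion, List.mem_toFinset, List.mem_map, exists_prop]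
  exact ⟨fun ⟨q, hq, hp⟩ => ⟨f q, ⟨q, hq, rfl⟩, hp⟩, fun ⟨_, ⟨q, hq, hfq⟩, hp⟩ => ⟨q, hq, hfq ▸ hp⟩⟩

theorem exists_isPrefixReplacement_zip {L R : List Piece} (hL : IsCylPartition L Set.univ)
    (hR : IsCylPartition R Set.univ) (hlen : L.length = R.length) :
    ∃ h : Equiv.Perm (C × C), IsPrefixReplacement h ∧
      ∀ q ∈ L.zip R, ∀ z, h (cat₂ q.1 z) = cat₂ q.2 z := by
  have hswap {l₁ l₂ : List Piece} {q : Piece × Piece} (hq : q ∈ l₁.zip l₂) :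
      q.swap ∈ l₂.zip l₁ :=
    List.zip_swap l₁ l₂ ▸ List.mem_map_of_mem hq
  have hinv : ∀ q ∈ L.zip R, ∀ z, zipReplace R L (cat₂ q.2 z) = cat₂ q.1 z :=
    fun q hq => zipReplace_cat₂ hR.1 hlen.symm (hswap hq)
  let h : Equiv.Perm (C × C) :=
    { toFun := zipReplace L R
      invFun := zipReplace R L
      left_inv := fun p => by
        obtain ⟨q, hq, z, rfl⟩ := exists_mem_zip_cat₂_eq hL.2 hlen p
        rw [zipReplace_cat₂ hL.1 hlen hq, hinv q hq]
      right_inv := fun p => by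
        obtain ⟨q, hq, z, rfl⟩ := exists_mem_zip_cat₂_eq hR.2 hlen.symm p
        rw [zipReplace_cat₂ hR.1 hlen.symm hq]
        exact zipReplace_cat₂ hL.1 hlen (q := q.swap) (hswap hq) z }
  obtain ⟨hcov₁, hdisj₁⟩ := IsCylPartition.iUnion_toFinset_and_disjoint (f := Prod.fst)
    (T := L.zip R) (by rwa [List.map_fst_zip hlen.le])
  obtain ⟨hcov₂, hdisj₂⟩ := IsCylPartition.iUnion_toFinset_and_disjoint (f := Prod.snd)
    (T := L.zip R) (by rwa [List.map_snd_zip hlen.ge])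
  exact ⟨h, ⟨(L.zip R).toFinset, hcov₁, hdisj₁, hcov₂, hdisj₂, fun q hq w w' =>
    zipReplace_cat₂ hL.1 hlen (List.mem_toFinset.mp hq) (w, w')⟩, fun q hq =>
    zipReplace_cat₂ hL.1 hlen hq⟩

lemma IsTranspositionOn.mul_mul_inv_eq {u₁ v₁ u₂ v₂ u₁' v₁' u₂' v₂' : List Bool}
    {τ σ h : Equiv.Perm (C × C)} (hτ : IsTranspositionOn u₁ v₁ u₂ v₂ τ)
    (hσ : IsTranspositionOn u₁' v₁' u₂' v₂' σ)
    (h₁ : ∀ w w' : C, h (cat u₁ w, cat v₁ w') = (cat u₁' w, cat v₁' w'))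
    (h₂ : ∀ w w' : C, h (cat u₂ w, cat v₂ w') = (cat u₂' w, cat v₂' w')) :
    h * τ * h⁻¹ = σ := by
  obtain ⟨-, hτ₁, hτ₂, hτ₀⟩ := hτ
  obtain ⟨-, hσ₁, hσ₂, hσ₀⟩ := hσ
  suffices h * τ = σ * h by rw [this, mul_inv_cancel_right]
  ext1 ⟨x, y⟩
  simp only [Equiv.Perm.mul_apply]
  by_cases hp₁ : (x, y) ∈ cyl u₁ ×ˢ cyl v₁
  · obtain ⟨⟨w, rfl⟩, ⟨w', rfl⟩⟩ := hp₁
    rw [hτ₁, h₂, h₁, hσ₁]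
  by_cases hp₂ : (x, y) ∈ cyl u₂ ×ˢ cyl v₂
  · obtain ⟨⟨w, rfl⟩, ⟨w', rfl⟩⟩ := hp₂
    rw [hτ₂, h₁, h₂, hσ₂]
  have hout : h (x, y) ∉ cyl u₁' ×ˢ cyl v₁' ∪ cyl u₂' ×ˢ cyl v₂' := by
    rintro (⟨⟨w, hw⟩, ⟨w', hw'⟩⟩ | ⟨⟨w, hw⟩, ⟨w', hw'⟩⟩)
    · exact hp₁ (h.injective ((h₁ w w').trans (Prod.ext hw hw')) ▸ ⟨⟨w, rfl⟩, ⟨w', rfl⟩⟩)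
    · exact hp₂ (h.injective ((h₂ w w').trans (Prod.ext hw hw')) ▸ ⟨⟨w, rfl⟩, ⟨w', rfl⟩⟩)
  rw [hτ₀ _ (by rintro (h | h) <;> contradiction), hσ₀ _ hout]

/-- Any two transpositions of disjoint cylinder sets (whose swapped cylinders do not
exhaust `C × C`) are conjugate by a prefix-replacement homeomorphism of `C × C`. -/
theorem stmt_14 (u₁ v₁ u₂ v₂ u₁' v₁' u₂' v₂' : List Bool)
    (τ σ : Equiv.Perm (C × C))
    (hτ : IsTranspositionOn u₁ v₁ u₂ v₂ τ)
    (hσ : IsTranspositionOn u₁' v₁' u₂' v₂' σ)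
    (hτc : ((cyl u₁ ×ˢ cyl v₁) ∪ (cyl u₂ ×ˢ cyl v₂))ᶜ.Nonempty)
    (hσc : ((cyl u₁' ×ˢ cyl v₁') ∪ (cyl u₂' ×ˢ cyl v₂'))ᶜ.Nonempty) :
    ∃ h : Equiv.Perm (C × C), IsPrefixReplacement h ∧ h * τ * h⁻¹ = σ := by
  obtain ⟨L, hL⟩ := exists_isCylPartition_compl [(u₁, v₁), (u₂, v₂)]
  obtain ⟨R, hR⟩ := exists_isCylPartition_compl [(u₁', v₁'), (u₂', v₂')]
  simp only [List.mem_cons, List.not_mem_nil, or_false, Set.iUnion_iUnion_eq_or_left,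
    Set.iUnion_iUnion_eq_left] at hL hR
  obtain ⟨L', hL', hL'len⟩ :=
    hL.exists_length_eq (hL.ne_nil hτc) (le_max_left L.length R.length)
  obtain ⟨R', hR', hR'len⟩ :=
    hR.exists_length_eq (hR.ne_nil hσc) (le_max_right L.length R.length)
  have hLfull := (isCylPartition_pair (q := (u₁, v₁)) (r := (u₂, v₂))
    (Set.disjoint_iff_inter_eq_empty.mpr hτ.1)).append hL' disjoint_compl_right
  have hRfull := (isCylPartition_pair (q := (u₁', v₁')) (r := (u₂', v₂'))
    (Set.disjoint_iff_inter_eq_empty.mpr hσ.1)).append hR' disjoint_compl_right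
  rw [Set.union_compl_self] at hLfull hRfull
  obtain ⟨h, hh, hcat⟩ := exists_isPrefixReplacement_zip hLfull hRfull (by simp [hL'len, hR'len])
  exact ⟨h, hh, hτ.mul_mul_inv_eq hσ
    (fun w w' => hcat ((u₁, v₁), (u₁', v₁')) (by simp) (w, w'))
    (fun w w' => hcat ((u₂, v₂), (u₂', v₂')) (by simp) (w, w'))⟩
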